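/- min(𝔤′, 𝔰) ≤ 𝔤 ≤ 𝔤′, where 𝔤′ is the smallest cardinality of a collection of non-meager downward-closed ideals of subsets of ω with empty intersection. In particular, if κ < min(𝔤′, 𝔰), then any κ groupwise dense subsets of [ω]^ω have a common member. -/

import Mathlib

open Set Cardinal MeasureTheory

/-- The characteristic function of a set of naturals, as a point of Cantor space `2^ω`. -/
noncomputable def chi (x : Set ℕ) : ℕ → Bool := fun n => @decide (n ∈ x) (Classical.dec _)

/-- `[ω]^ω`: the collection of infinite subsets of ω. -/
def InfSets : Set (Set ℕ) := {x : Set ℕ | x.Infinite}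

/-- `X ⊆ [ω]^ω` is downward closed for almost-inclusion `x ≤ y ↔ (x \ y).Finite`. -/
def DownClosed (X : Set (Set ℕ)) : Prop :=
  ∀ y ∈ X, ∀ x : Set ℕ, x.Infinite → (x \ y).Finite → x ∈ X

/-- `X` is meager as a subset of Cantor space `2^ω` (product topology on `ℕ → Bool`). -/
def MeagerSet (X : Set (Set ℕ)) : Prop := IsMeagre (chi '' X)

/-- A partition of ω into consecutive finite intervals `I n = [e n, e (n+1))`. -/
structure IntervalPartition where
  e : ℕ → ℕ
  zero : e 0 = 0
  mono : StrictMono e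

/-- The `n`-th interval of an interval partition. -/
def IntervalPartition.I (P : IntervalPartition) (n : ℕ) : Set ℕ :=
  Set.Ico (P.e n) (P.e (n + 1))

/-- `X ⊆ [ω]^ω` is groupwise dense: downward closed, and for every partition of ω into
finite intervals, the union of some infinitely many of the intervals belongs to `X`. -/
def GroupwiseDense (X : Set (Set ℕ)) : Prop :=
  X ⊆ InfSets ∧ DownClosed X ∧
    ∀ P : IntervalPartition, ∃ A : Set ℕ, A.Infinite ∧ (⋃ n ∈ A, P.I n) ∈ X

/-- `g` eventually majorizes `f`. -/
def EvMaj (f g : ℕ → ℕ) : Prop := ∀ᶠ k in Filter.atTop, f k ≤ g k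

/-- `M(Π)`: the infinite subsets of ω including only finitely many intervals of `Π`. -/
def MSet (P : IntervalPartition) : Set (Set ℕ) :=
  {x : Set ℕ | x.Infinite ∧ {n : ℕ | P.I n ⊆ x}.Finite}

/-- The index `n` of the interval `I n` of `P` containing `k`. -/
def idx (P : IntervalPartition) (k : ℕ) : ℕ := Nat.findGreatest (fun n => P.e n ≤ k) k

/-- `F_Π(k)`: the largest element of `I (n+2)`, where `k ∈ I n`. -/
def FPart (P : IntervalPartition) (k : ℕ) : ℕ := P.e (idx P k + 3) - 1

/-- The groupwise density number 𝔤. -/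
noncomputable def gNum : Cardinal :=
  sInf {c : Cardinal | ∃ S : Set (Set (Set ℕ)), (∀ G ∈ S, GroupwiseDense G) ∧
    #S = c ∧ InfSets ∩ ⋂₀ S = ∅}

/-- The bounding number 𝔟. -/
noncomputable def bNum : Cardinal :=
  sInf {c : Cardinal | ∃ F : Set (ℕ → ℕ), #F = c ∧ ∀ g : ℕ → ℕ, ∃ f ∈ F, ¬ EvMaj f g}

/-- The dominating number 𝔡. -/
noncomputable def dNum : Cardinal :=
  sInf {c : Cardinal | ∃ F : Set (ℕ → ℕ), #F = c ∧ ∀ g : ℕ → ℕ, ∃ f ∈ F, EvMaj g f}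

/-- `B_M`: the ideal of meager downward-closed subsets of `[ω]^ω`. -/
def BM : Set (Set (Set ℕ)) := {X : Set (Set ℕ) | X ⊆ InfSets ∧ DownClosed X ∧ MeagerSet X}

/-- `add(B_M)`. -/
noncomputable def addBM : Cardinal :=
  sInf {c : Cardinal | ∃ S : Set (Set (Set ℕ)), S ⊆ BM ∧ #S = c ∧ ⋃₀ S ∉ BM}

/-- `cov(B_M)`. -/
noncomputable def covBM : Cardinal :=
  sInf {c : Cardinal | ∃ S : Set (Set (Set ℕ)), S ⊆ BM ∧ #S = c ∧
    {x : Set ℕ | x.Infinite ∧ xᶜ.Infinite} ⊆ ⋃₀ S}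

/-- `unif(B_M)`. -/
noncomputable def unifBM : Cardinal :=
  sInf {c : Cardinal | ∃ S : Set (Set ℕ), (∀ x ∈ S, x.Infinite ∧ xᶜ.Infinite) ∧ #S = c ∧
    ∀ X ∈ BM, ¬ S ⊆ X}

/-- `cof(B_M)`. -/
noncomputable def cofBM : Cardinal :=
  sInf {c : Cardinal | ∃ C : Set (Set (Set ℕ)), C ⊆ BM ∧ #C = c ∧
    ∀ X ∈ BM, ∃ Y ∈ C, X ⊆ Y}

/-- `X ⊆ [ω]^ω` is dense: every infinite `A` has an infinite subset `B ∈ X`. -/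
def DenseM (X : Set (Set ℕ)) : Prop :=
  ∀ A : Set ℕ, A.Infinite → ∃ B ⊆ A, B.Infinite ∧ B ∈ X

/-- 𝔤′: the least number of non-meager downward-closed ideals on ω with empty intersection. -/
noncomputable def gNum' : Cardinal :=
  sInf {c : Cardinal | ∃ S : Set (Set (Set ℕ)),
    (∀ X ∈ S, X ⊆ InfSets ∧ DownClosed X ∧ (∀ x ∈ X, ∀ y ∈ X, x ∪ y ∈ X) ∧ ¬ MeagerSet X) ∧
    #S = c ∧ InfSets ∩ ⋂₀ S = ∅}

/-- The splitting number 𝔰. -/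
noncomputable def sNum : Cardinal :=
  sInf {c : Cardinal | ∃ S : Set (Set ℕ), #S = c ∧
    ∀ x : Set ℕ, x.Infinite → ∃ y ∈ S, (x ∩ y).Infinite ∧ (x \ y).Infinite}

/-!
Groupwise dense families are not meager (Talagrand): given dense open sets `D n`, one builds an
interval partition with a pattern on each interval such that every point following the `n`-th
pattern lies in `D 0 ∩ … ∩ D n`, whatever it does elsewhere; a union of infinitely many pairs of
consecutive intervals can then be thinned, inside the family, to follow infinitely many patterns.
Conversely, a non-meager downward-closed family contains a union of infinitely many intervals of
every partition, because the sets including only finitely many of them form a meager set. Hence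
non-meager ideals are groupwise dense and `𝔤 ≤ 𝔤′`. The dual ideals of the nonprincipal
ultrafilters belong to both classes and have no common member, so neither infimum is taken over the
empty set (where `sInf` would be `0`).

For `min 𝔤′ 𝔰 ≤ 𝔤`: the ideals generated by fewer than `𝔤′` groupwise dense families have a common
infinite member `z`, almost covered by finitely many members of each family. Fewer than `𝔰` sets
leave some infinite `x ⊆ z` unsplit, and such an `x` is almost included in one of the finitely many
members covering it, hence lies in every family.
-/

lemma isOpen_setOf_eqOn {s : Set ℕ} (hs : s.Finite) (σ : ℕ → Bool) :
    IsOpen {f : ℕ → Bool | EqOn f σ s} := by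
  have : {f : ℕ → Bool | EqOn f σ s} = s.pi fun k => {σ k} := by
    ext f; simp [EqOn, Set.mem_pi]
  rw [this]
  exact isOpen_set_pi hs fun _ _ => isOpen_discrete _

lemma IsOpen.exists_eqOn_Iio_mem {U : Set (ℕ → Bool)} (hU : IsOpen U) {f : ℕ → Bool}
    (hf : f ∈ U) : ∃ m, ∀ g : ℕ → Bool, EqOn g f (Iio m) → g ∈ U := by
  obtain ⟨I, u, hu, hsub⟩ := isOpen_pi_iff.1 hU f hf
  obtain ⟨m, hm⟩ := I.bddAbove
  refine ⟨m + 1, fun g hg => hsub fun i hi => ?_⟩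
  rw [hg (Nat.lt_succ_of_le (hm hi))]
  exact (hu i hi).2

lemma Dense.exists_extend_eqOn_mem {D : Set (ℕ → Bool)} (hD : Dense D) (hDo : IsOpen D)
    {a c : ℕ} (hac : a ≤ c) (v : Fin a → Bool) (σ : ℕ → Bool) :
    ∃ c' ≥ c, ∃ σ' : ℕ → Bool, EqOn σ' σ (Ico a c) ∧
      ∀ f : ℕ → Bool, (∀ i : Fin a, f i = v i) → EqOn f σ' (Ico a c') → f ∈ D := by
  let g : ℕ → Bool := fun k => if h : k < a then v ⟨k, h⟩ else σ k
  obtain ⟨h, hhD, hhg⟩ :=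
    hD.exists_mem_open (isOpen_setOf_eqOn (finite_Iio c) g) ⟨g, fun _ _ => rfl⟩
  obtain ⟨m, hm⟩ := hDo.exists_eqOn_Iio_mem hhD
  refine ⟨max c m, le_max_left _ _, h, fun k hk => ?_, fun f hfv hfh => hm f fun k hk => ?_⟩
  · rw [hhg (show k < c from hk.2)]
    simp [g, not_lt.2 hk.1]
  · rcases lt_or_ge k a with hka | hka
    · rw [hhg (show k < c by omega), hfv ⟨k, hka⟩]
      simp [g, hka]
    · exact hfh ⟨hka, lt_max_of_lt_right hk⟩

lemma Dense.exists_extend_eqOn_mem_of_finset {D : Set (ℕ → Bool)} (hD : Dense D)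
    (hDo : IsOpen D) {a : ℕ} (V : Finset (Fin a → Bool)) :
    ∀ c ≥ a, ∀ σ : ℕ → Bool, ∃ c' ≥ c, ∃ σ' : ℕ → Bool, EqOn σ' σ (Ico a c) ∧
      ∀ v ∈ V, ∀ f : ℕ → Bool, (∀ i : Fin a, f i = v i) → EqOn f σ' (Ico a c') →
        f ∈ D := by
  classical
  induction V using Finset.induction_on with
  | empty => exact fun c _ σ => ⟨c, le_rfl, σ, fun _ _ => rfl, by simp⟩
  | insert v V _ ih =>
    intro c hac σ
    obtain ⟨c₁, hc₁, σ₁, hσ₁, hV⟩ := ih c hac σ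
    obtain ⟨c', hc', σ', hσ', hv⟩ := hD.exists_extend_eqOn_mem hDo (hac.trans hc₁) v σ₁
    refine ⟨c', hc₁.trans hc', σ', fun k hk => ?_, ?_⟩
    · rw [hσ' ⟨hk.1, hk.2.trans_le hc₁⟩, hσ₁ hk]
    · rintro w hw f hfw hfσ'
      rcases Finset.mem_insert.1 hw with rfl | hw
      · exact hv f hfw hfσ'
      · exact hV w hw f hfw fun k hk => (hfσ' ⟨hk.1, hk.2.trans_le hc'⟩).trans (hσ' hk)

lemma Dense.exists_block_eqOn_mem {D : Set (ℕ → Bool)} (hD : Dense D) (hDo : IsOpen D)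
    (a : ℕ) : ∃ b > a, ∃ σ : ℕ → Bool, ∀ f : ℕ → Bool, EqOn f σ (Ico a b) → f ∈ D := by
  obtain ⟨b, hb, σ, -, hσ⟩ :=
    hD.exists_extend_eqOn_mem_of_finset hDo Finset.univ (a + 1) (Nat.le_succ a) fun _ => false
  exact ⟨b, hb, σ, fun f hf => hσ (fun i => f i) (Finset.mem_univ _) f (fun _ => rfl) hf⟩

lemma exists_intervalPartition_eqOn_mem (D : ℕ → Set (ℕ → Bool)) (hD : ∀ n, Dense (D n))
    (hDo : ∀ n, IsOpen (D n)) : ∃ (P : IntervalPartition) (σ : ℕ → ℕ → Bool),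
      ∀ n f, EqOn f (σ n) (P.I n) → f ∈ D n := by
  choose b hb σ hσ using fun n => (hD n).exists_block_eqOn_mem (hDo n)
  let e : ℕ → ℕ := fun n => Nat.rec 0 (fun m em => b m em) n
  exact ⟨⟨e, rfl, strictMono_nat_of_lt_succ fun n => hb n (e n)⟩, fun n => σ n (e n),
    fun n f hf => hσ n (e n) f hf⟩

lemma IsMeagre.exists_seq_dense_isOpen {X : Type*} [TopologicalSpace X] {s : Set X}
    (hs : IsMeagre s) : ∃ D : ℕ → Set X, (∀ n, Dense (D n)) ∧ (∀ n, IsOpen (D n)) ∧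
      ∀ x ∈ s, ∃ n, x ∉ D n := by
  obtain ⟨S, hSo, hSd, hSc, hsub⟩ := mem_residual_iff.1 hs
  obtain ⟨D, hD⟩ := (hSc.insert Set.univ).exists_eq_range (insert_nonempty _ _)
  have hmem : ∀ n, D n ∈ insert Set.univ S := fun n => hD ▸ mem_range_self n
  refine ⟨D, fun n => ?_, fun n => ?_, fun x hx => ?_⟩
  · rcases hmem n with h | h
    · exact h ▸ dense_univ
    · exact hSd _ h
  · rcases hmem n with h | h
    · exact h ▸ isOpen_univ
    · exact hSo _ h
  · by_contra! hxD
    refine hsub (fun t ht => ?_) hx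
    obtain ⟨n, rfl⟩ : t ∈ range D := hD ▸ mem_insert_of_mem _ ht
    exact hxD n

namespace IntervalPartition

variable (P : IntervalPartition)

lemma e_mem_I (n : ℕ) : P.e n ∈ P.I n := ⟨le_rfl, P.mono n.lt_succ_self⟩

lemma exists_mem_I (k : ℕ) : ∃ n, k ∈ P.I n := by
  have hex : ∃ n, k < P.e (n + 1) := ⟨k, (P.mono.id_le (k + 1)).trans_lt' k.lt_succ_self⟩
  refine ⟨Nat.find hex, ?_, Nat.find_spec hex⟩
  rcases h : Nat.find hex with _ | n
  · simp [P.zero]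
  · exact not_lt.1 (Nat.find_min hex (h ▸ n.lt_succ_self))

lemma eq_of_mem_I {k m n : ℕ} (hm : k ∈ P.I m) (hn : k ∈ P.I n) : m = n := by
  by_contra hmn
  wlog hlt : m < n generalizing m n
  · exact this hn hm (Ne.symm hmn) (by omega)
  have := P.mono.monotone (Nat.succ_le_of_lt hlt)
  exact absurd (hm.2.trans_le this) (not_lt.2 hn.1)

lemma infinite_biUnion_I {A : Set ℕ} (hA : A.Infinite) : (⋃ n ∈ A, P.I n).Infinite :=
  (hA.image P.mono.injective.injOn).mono <| by
    rintro _ ⟨n, hn, rfl⟩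
    exact mem_biUnion hn (P.e_mem_I n)

lemma compl_biUnion_I (A : Set ℕ) : (⋃ n ∈ A, P.I n)ᶜ = ⋃ n ∈ Aᶜ, P.I n := by
  ext k
  obtain ⟨m, hm⟩ := P.exists_mem_I k
  simp only [mem_compl_iff, mem_iUnion, exists_prop, not_exists, not_and]
  exact ⟨fun h => ⟨m, fun hmA => h m hmA hm, hm⟩,
    fun ⟨n, hnA, hn⟩ n' hn'A hn' => hnA (P.eq_of_mem_I hn' hn ▸ hn'A)⟩

def pairs : IntervalPartition where
  e m := P.e (2 * m)
  zero := P.zero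
  mono := P.mono.comp (strictMono_mul_left_of_pos two_pos)

lemma pairs_I (m : ℕ) : P.pairs.I m = P.I (2 * m) ∪ P.I (2 * m + 1) :=
  (Ico_union_Ico_eq_Ico (P.mono.monotone (by omega)) (P.mono.monotone (by omega))).symm

end IntervalPartition

lemma chi_eq_true {x : Set ℕ} {k : ℕ} : chi x k = true ↔ k ∈ x := by
  simp [chi]

lemma eqOn_chi_true_iff {x s : Set ℕ} : EqOn (chi x) (fun _ => true) s ↔ s ⊆ x :=
  forall₂_congr fun _ _ => chi_eq_true

lemma DownClosed.mem_of_subset {X : Set (Set ℕ)} (hX : DownClosed X) {x y : Set ℕ}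
    (hy : y ∈ X) (hx : x.Infinite) (hxy : x ⊆ y) : x ∈ X :=
  hX y hy x hx (by simp [sdiff_eq_empty.2 hxy])

lemma GroupwiseDense.not_meagerSet {X : Set (Set ℕ)} (hX : GroupwiseDense X) :
    ¬ MeagerSet X := by
  intro hm
  obtain ⟨D, hDd, hDo, hD⟩ := IsMeagre.exists_seq_dense_isOpen hm
  obtain ⟨Q, σ, hQσ⟩ :=
    exists_intervalPartition_eqOn_mem (fun n => ⋂ i ∈ Iic n, D i)
      (fun n => dense_biInter_of_isOpen (fun i _ => hDo i) (to_countable _) fun i _ => hDd i)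
      fun n => (finite_Iic n).isOpen_biInter fun i _ => hDo i
  obtain ⟨A, hA, hAX⟩ := hX.2.2 Q.pairs
  -- `chi y` follows `σ (2m)` on `Q.I (2m)` for `m ∈ A`; the intervals `Q.I (2m + 1)` keep `y`
  -- infinite.
  let y : Set ℕ := ⋃ m ∈ A, ({k ∈ Q.I (2 * m) | σ (2 * m) k = true} ∪ Q.I (2 * m + 1))
  have hy_inf : y.Infinite := by
    have hinj : InjOn (2 * · + 1) A := fun a _ b _ h => by simp only at h; omega
    refine (Q.infinite_biUnion_I (hA.image hinj)).mono ?_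
    rw [biUnion_image]
    exact biUnion_mono subset_rfl fun m _ => subset_union_right
  have hyX : y ∈ X := hX.2.1.mem_of_subset hAX hy_inf <| biUnion_mono subset_rfl fun m _ => by
    rw [Q.pairs_I]
    exact union_subset_union_left _ (sep_subset _ _)
  have hy_eqOn : ∀ m ∈ A, EqOn (chi y) (σ (2 * m)) (Q.I (2 * m)) := by
    refine fun m hm k hk => Bool.eq_iff_iff.2 (chi_eq_true.trans ⟨?_, fun h => ?_⟩)
    · simp only [y, mem_iUnion, mem_union, mem_ofPred_eq, exists_prop]
      rintro ⟨m', -, ⟨hk', h⟩ | hk'⟩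
      · rwa [Q.eq_of_mem_I hk hk']
      · have := Q.eq_of_mem_I hk hk'
        omega
    · exact mem_biUnion hm (Or.inl ⟨hk, h⟩)
  obtain ⟨n, hn⟩ := hD (chi y) (mem_image_of_mem chi hyX)
  obtain ⟨m, hm, hnm⟩ := hA.exists_gt n
  exact hn (mem_iInter₂.1 (hQσ (2 * m) (chi y) (hy_eqOn m hm)) n (by simp only [mem_Iic]; omega))

lemma isNowhereDense_setOf_forall_not_eqOn_true (P : IntervalPartition) (m : ℕ) :
    IsNowhereDense {f : ℕ → Bool | ∀ n ≥ m, ¬ EqOn f (fun _ => true) (P.I n)} := by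
  have hclosed : IsClosed {f : ℕ → Bool | ∀ n ≥ m, ¬ EqOn f (fun _ => true) (P.I n)} := by
    simp only [ofPred_forall]
    exact isClosed_iInter fun n => isClosed_iInter fun _ =>
      (isOpen_setOf_eqOn (finite_Ico _ _) _).isClosed_compl
  rw [hclosed.isNowhereDense_iff, eq_empty_iff_forall_notMem]
  intro f hf
  obtain ⟨b, hb⟩ := isOpen_interior.exists_eqOn_Iio_mem hf
  let g : ℕ → Bool := fun k => if k < b then f k else true
  have hg : g ∈ interior _ := hb g fun k hk => if_pos hk
  refine interior_subset hg (max m b) (le_max_left _ _) fun k hk => if_neg ?_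
  have := P.mono.id_le (max m b)
  simp only [id] at this
  exact not_lt.2 ((le_max_right m b).trans (this.trans hk.1))

lemma meagerSet_MSet (P : IntervalPartition) : MeagerSet (MSet P) := by
  refine IsMeagre.mono ?_ (isMeagre_iUnion fun m =>
    (isNowhereDense_setOf_forall_not_eqOn_true P m).isMeagre)
  rintro _ ⟨x, ⟨-, hx⟩, rfl⟩
  obtain ⟨b, hb⟩ := hx.bddAbove
  exact mem_iUnion.2 ⟨b + 1, fun n hn h => by have := hb (eqOn_chi_true_iff.1 h); omega⟩

lemma groupwiseDense_of_not_meagerSet {X : Set (Set ℕ)} (hXinf : X ⊆ InfSets)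
    (hX : DownClosed X) (hXm : ¬ MeagerSet X) : GroupwiseDense X := by
  refine ⟨hXinf, hX, fun P => ?_⟩
  by_contra! hP
  refine hXm (IsMeagre.mono (image_mono fun x hx => show x ∈ MSet P from ⟨hXinf hx, ?_⟩)
    (meagerSet_MSet P))
  by_contra hA
  exact hP _ hA (hX.mem_of_subset hx (P.infinite_biUnion_I hA) (iUnion₂_subset fun n hn => hn))

def IsNonmeagerIdeal (X : Set (Set ℕ)) : Prop :=
  X ⊆ InfSets ∧ DownClosed X ∧ (∀ x ∈ X, ∀ y ∈ X, x ∪ y ∈ X) ∧ ¬ MeagerSet X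

lemma IsNonmeagerIdeal.groupwiseDense {X : Set (Set ℕ)} (hX : IsNonmeagerIdeal X) :
    GroupwiseDense X :=
  groupwiseDense_of_not_meagerSet hX.1 hX.2.1 hX.2.2.2

def idealSpan (G : Set (Set ℕ)) : Set (Set ℕ) :=
  {x : Set ℕ | x.Infinite ∧ ∃ t : Set (Set ℕ), t.Finite ∧ t ⊆ G ∧ (x \ ⋃₀ t).Finite}

lemma GroupwiseDense.isNonmeagerIdeal_idealSpan {G : Set (Set ℕ)} (hG : GroupwiseDense G) :
    IsNonmeagerIdeal (idealSpan G) := by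
  have hdown : DownClosed (idealSpan G) := by
    rintro y ⟨-, t, ht, htG, hyt⟩ x hx hxy
    exact ⟨hx, t, ht, htG, (hxy.union hyt).subset fun k hk => by by_cases k ∈ y <;> aesop⟩
  have hsub : G ⊆ idealSpan G := fun x hx =>
    ⟨hG.1 hx, {x}, finite_singleton x, singleton_subset_iff.2 hx, by simp⟩
  refine ⟨fun x hx => hx.1, hdown, ?_, fun hm => ?_⟩
  · rintro x ⟨hx, s, hs, hsG, hxs⟩ y ⟨-, t, ht, htG, hyt⟩
    refine ⟨hx.mono subset_union_left, s ∪ t, hs.union ht, union_subset hsG htG, ?_⟩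
    rw [sUnion_union, union_sdiff_distrib]
    exact (hxs.subset (sdiff_subset_sdiff_right subset_union_left)).union
      (hyt.subset (sdiff_subset_sdiff_right subset_union_right))
  · refine GroupwiseDense.not_meagerSet ⟨fun x hx => hx.1, hdown, fun P => ?_⟩ hm
    obtain ⟨A, hA, hAG⟩ := hG.2.2 P
    exact ⟨A, hA, hsub hAG⟩

lemma infinite_setOf_odd : {n : ℕ | Odd n}.Infinite :=
  infinite_of_forall_exists_gt fun b => ⟨2 * b + 1, odd_two_mul_add_one b, by omega⟩

lemma infinite_compl_setOf_odd : {n : ℕ | Odd n}ᶜ.Infinite :=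
  infinite_of_forall_exists_gt fun b => ⟨2 * (b + 1), by simp [parity_simps], by omega⟩

def dualIdeal (U : Ultrafilter ℕ) : Set (Set ℕ) := {x : Set ℕ | x.Infinite ∧ xᶜ ∈ U}

lemma groupwiseDense_dualIdeal {U : Ultrafilter ℕ} (hU : (U : Filter ℕ) ≤ Filter.cofinite) :
    GroupwiseDense (dualIdeal U) := by
  refine ⟨fun x hx => hx.1, ?_, fun P => ?_⟩
  · rintro y ⟨-, hy⟩ x hx hxy
    refine ⟨hx, Filter.mem_of_superset (Filter.inter_mem hy (hU hxy.compl_mem_cofinite)) ?_⟩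
    rintro k ⟨hky, hkxy⟩ hkx
    exact hkxy ⟨hkx, hky⟩
  · rcases U.mem_or_compl_mem (⋃ n ∈ {n : ℕ | Odd n}, P.I n) with h | h
    · rw [← compl_compl (⋃ n ∈ _, P.I n), P.compl_biUnion_I] at h
      exact ⟨_, infinite_compl_setOf_odd, P.infinite_biUnion_I infinite_compl_setOf_odd, h⟩
    · exact ⟨_, infinite_setOf_odd, P.infinite_biUnion_I infinite_setOf_odd, h⟩

lemma isNonmeagerIdeal_dualIdeal {U : Ultrafilter ℕ} (hU : (U : Filter ℕ) ≤ Filter.cofinite) :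
    IsNonmeagerIdeal (dualIdeal U) := by
  have hG := groupwiseDense_dualIdeal hU
  refine ⟨hG.1, hG.2.1, ?_, hG.not_meagerSet⟩
  rintro x ⟨hx, hxU⟩ y ⟨-, hyU⟩
  exact ⟨hx.mono subset_union_left, compl_union x y ▸ Filter.inter_mem hxU hyU⟩

lemma exists_notMem_dualIdeal {x : Set ℕ} (hx : x.Infinite) :
    ∃ U : Ultrafilter ℕ, (U : Filter ℕ) ≤ Filter.cofinite ∧ x ∉ dualIdeal U := by
  obtain ⟨U, hU⟩ := Filter.exists_ultrafilter_iff.2 hx.cofinite_inf_principal_neBot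
  refine ⟨U, hU.trans inf_le_left, fun hxU => U.compl_notMem_iff.2 ?_ hxU.2⟩
  exact Filter.le_principal_iff.1 (hU.trans inf_le_right)

lemma exists_dualIdeal_family : ∃ S : Set (Set (Set ℕ)),
    (∀ X ∈ S, IsNonmeagerIdeal X ∧ GroupwiseDense X) ∧ InfSets ∩ ⋂₀ S = ∅ := by
  refine ⟨{X | ∃ U : Ultrafilter ℕ, (U : Filter ℕ) ≤ Filter.cofinite ∧ X = dualIdeal U}, ?_, ?_⟩
  · rintro _ ⟨U, hU, rfl⟩
    exact ⟨isNonmeagerIdeal_dualIdeal hU, groupwiseDense_dualIdeal hU⟩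
  · refine eq_empty_iff_forall_notMem.2 fun x ⟨hx, hxS⟩ => ?_
    obtain ⟨U, hU, hxU⟩ := exists_notMem_dualIdeal hx
    exact hxU (hxS _ ⟨U, hU, rfl⟩)

lemma exists_forall_mem_of_lt_gNum' {T : Set (Set (Set ℕ))} (hT : ∀ X ∈ T, IsNonmeagerIdeal X)
    (hTc : #T < gNum') : ∃ z : Set ℕ, z.Infinite ∧ ∀ X ∈ T, z ∈ X := by
  by_contra! h
  refine notMem_of_lt_csInf' hTc ⟨T, hT, rfl, eq_empty_iff_forall_notMem.2 ?_⟩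
  rintro z ⟨hz, hzT⟩
  obtain ⟨X, hX, hzX⟩ := h z hz
  exact hzX (hzT X hX)

def Splits (y x : Set ℕ) : Prop := (x ∩ y).Infinite ∧ (x \ y).Infinite

lemma Splits.mono {x x' y : Set ℕ} (h : Splits y x') (hx : x' ⊆ x) : Splits y x :=
  ⟨h.1.mono (inter_subset_inter_left y hx), h.2.mono (sdiff_subset_sdiff_left hx)⟩

lemma splits_image_iff {h : ℕ → ℕ} (hh : Function.Injective h) {w y : Set ℕ} :
    Splits y (h '' w) ↔ Splits (h ⁻¹' y) w := by
  rw [Splits, Splits, ← image_inter_preimage, ← image_sdiff_preimage,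
    infinite_image_iff hh.injOn, infinite_image_iff hh.injOn]

lemma exists_injective_image_univ_eq {z : Set ℕ} (hz : z.Infinite) :
    ∃ h : ℕ → ℕ, Function.Injective h ∧ h '' univ = z :=
  ⟨Nat.nth (· ∈ z), Nat.nth_injective hz, image_univ.trans (Nat.range_nth_of_infinite hz)⟩

lemma exists_splits {x : Set ℕ} (hx : x.Infinite) : ∃ y, Splits y x := by
  obtain ⟨h, hh, rfl⟩ := exists_injective_image_univ_eq hx
  refine ⟨h '' {n | Odd n}, (splits_image_iff hh).2 ?_⟩
  rw [preimage_image_eq _ hh, Splits, univ_inter, ← compl_eq_univ_sdiff]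
  exact ⟨infinite_setOf_odd, infinite_compl_setOf_odd⟩

lemma exists_forall_not_splits_of_finite {S : Set (Set ℕ)} (hS : S.Finite) :
    ∃ x : Set ℕ, x.Infinite ∧ ∀ y ∈ S, ¬ Splits y x := by
  induction S, hS using Set.Finite.induction_on with
  | empty => exact ⟨univ, infinite_univ, by simp⟩
  | @insert y S _ _ ih =>
    obtain ⟨x, hx, hxS⟩ := ih
    have hunsplit : ∀ x' ⊆ x, ∀ z ∈ S, ¬ Splits z x' :=
      fun x' hx' z hz h => hxS z hz (h.mono hx')
    rcases infinite_union.1 ((inter_union_sdiff x y).symm ▸ hx) with h | h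
    · exact ⟨x ∩ y, h, forall_mem_insert.2 ⟨fun h' => h'.2 (finite_empty.subset
        fun _ hk => hk.2 hk.1.2), hunsplit _ inter_subset_left⟩⟩
    · exact ⟨x \ y, h, forall_mem_insert.2 ⟨fun h' => h'.1 (finite_empty.subset
        fun _ hk => hk.1.2 hk.2), hunsplit _ sdiff_subset⟩⟩

lemma aleph0_le_sNum : ℵ₀ ≤ sNum := by
  refine le_csInf ⟨_, univ, rfl, fun x hx => ?_⟩ ?_
  · obtain ⟨y, hy⟩ := exists_splits hx
    exact ⟨y, mem_univ y, hy⟩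
  · rintro _ ⟨S, rfl, hS⟩
    by_contra! hSc
    obtain ⟨x, hx, hxS⟩ := exists_forall_not_splits_of_finite (lt_aleph0_iff_set_finite.1 hSc)
    obtain ⟨y, hyS, hxy⟩ := hS x hx
    exact hxS y hyS hxy

lemma exists_subset_forall_not_splits {z : Set ℕ} (hz : z.Infinite) {F : Set (Set ℕ)}
    (hF : #F < sNum) : ∃ x ⊆ z, x.Infinite ∧ ∀ y ∈ F, ¬ Splits y x := by
  obtain ⟨h, hh, rfl⟩ := exists_injective_image_univ_eq hz
  obtain ⟨w, hw, hwF⟩ : ∃ w : Set ℕ, w.Infinite ∧ ∀ y ∈ preimage h '' F, ¬ Splits y w := by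
    by_contra! hsplit
    exact notMem_of_lt_csInf' (mk_image_le.trans_lt hF) ⟨_, rfl, hsplit⟩
  refine ⟨h '' w, image_mono (subset_univ w), hw.image hh.injOn, fun y hy => ?_⟩
  rw [splits_image_iff hh]
  exact hwF _ (mem_image_of_mem _ hy)

universe u

lemma mk_biUnion_lt_of_finite {ι α : Type u} {s : Set ι} {A : ι → Set α}
    (hA : ∀ i ∈ s, (A i).Finite) {c : Cardinal} (hc : ℵ₀ ≤ c) (hs : #s < c) :
    #(⋃ i ∈ s, A i) < c := by
  rcases s.finite_or_infinite with hfin | hinf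
  · exact (hfin.biUnion hA).lt_aleph0.trans_le hc
  · have := hinf.to_subtype
    calc #(⋃ i ∈ s, A i) ≤ #s * ⨆ i : s, #(A i) := mk_biUnion_le A s
      _ ≤ #s * ℵ₀ := by gcongr; exact ciSup_le' fun i => (hA i i.2).lt_aleph0.le
      _ = #s := mul_aleph0_eq (aleph0_le_mk s)
      _ < c := hs

lemma DownClosed.mem_of_forall_not_splits {G : Set (Set ℕ)} (hG : DownClosed G) {x : Set ℕ}
    (hx : x.Infinite) {t : Set (Set ℕ)} (ht : t.Finite) (htG : t ⊆ G)
    (hxt : (x \ ⋃₀ t).Finite) (hxs : ∀ y ∈ t, ¬ Splits y x) : x ∈ G := by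
  by_contra hxG
  have hfin : ∀ y ∈ t, (x ∩ y).Finite := fun y hy => by
    by_contra hinf
    exact hxs y hy ⟨hinf, fun h => hxG (hG y (htG hy) x hx h)⟩
  refine hx ((hxt.union (ht.biUnion hfin)).subset fun k hk => ?_)
  by_cases hkt : k ∈ ⋃₀ t
  · obtain ⟨y, hy, hky⟩ := hkt
    exact Or.inr (mem_biUnion hy ⟨hk, hky⟩)
  · exact Or.inl ⟨hk, hkt⟩

lemma exists_forall_mem_of_lt_min {S : Set (Set (Set ℕ))} (hS : ∀ G ∈ S, GroupwiseDense G)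
    (hSc : #S < min gNum' sNum) : ∃ x : Set ℕ, x.Infinite ∧ ∀ G ∈ S, x ∈ G := by
  obtain ⟨z, hz, hzS⟩ := exists_forall_mem_of_lt_gNum' (T := idealSpan '' S)
    (forall_mem_image.2 fun G hG => (hS G hG).isNonmeagerIdeal_idealSpan)
    (mk_image_le.trans_lt (lt_min_iff.1 hSc).1)
  choose! t ht htG hzt using fun G (hG : G ∈ S) => (hzS _ (mem_image_of_mem _ hG)).2
  obtain ⟨x, hxz, hx, hxt⟩ := exists_subset_forall_not_splits hz (F := ⋃ G ∈ S, t G)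
    (mk_biUnion_lt_of_finite ht aleph0_le_sNum (lt_min_iff.1 hSc).2)
  refine ⟨x, hx, fun G hG => (hS G hG).2.1.mem_of_forall_not_splits hx (ht G hG) (htG G hG)
    ((hzt G hG).subset (sdiff_subset_sdiff_left hxz)) fun y hy => hxt y (mem_biUnion hG hy)⟩

/-- Theorem 7: min(𝔤′, 𝔰) ≤ 𝔤 ≤ 𝔤′; in particular fewer than min(𝔤′, 𝔰) groupwise
dense sets have a common member. -/
theorem stmt18 :
    min gNum' sNum ≤ gNum ∧ gNum ≤ gNum' ∧
    ∀ (ι : Type) (G : ι → Set (Set ℕ)), #ι < min gNum' sNum →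
      (∀ i, GroupwiseDense (G i)) → ∃ x : Set ℕ, x.Infinite ∧ ∀ i, x ∈ G i := by
  obtain ⟨W, hW, hWempty⟩ := exists_dualIdeal_family
  refine ⟨?_, ?_, fun ι G hι hG => ?_⟩
  · refine le_csInf ⟨#W, W, fun X hX => (hW X hX).2, rfl, hWempty⟩ ?_
    rintro _ ⟨S, hS, rfl, hSempty⟩
    by_contra! hSc
    obtain ⟨x, hx, hxS⟩ := exists_forall_mem_of_lt_min hS hSc
    exact hSempty.subset ⟨hx, hxS⟩
  · refine le_csInf ⟨#W, W, fun X hX => (hW X hX).1, rfl, hWempty⟩ ?_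
    rintro _ ⟨S, hS, rfl, hSempty⟩
    exact csInf_le' ⟨S, fun X hX => IsNonmeagerIdeal.groupwiseDense (hS X hX), rfl, hSempty⟩
  · obtain ⟨x, hx, hxG⟩ := exists_forall_mem_of_lt_min (forall_mem_range.2 hG)
      (mk_range_le.trans_lt hι)
    exact ⟨x, hx, fun i => hxG _ (mem_range_self i)⟩
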